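/- Let A, B, C be abelian categories, F : A ⥤ C right exact, G : B ⥤ C left exact. Every object of A and every object of B admits a Jordan–Hölder filtration (a finite filtration with simple quotients) if and only if every object of the comma category Comma F G admits a Jordan–Hölder filtration. -/

import Mathlib

/-!
The projections `Comma F G ⥤ A` and `Comma F G ⥤ B` are exact: cokernels in `Comma F G` are
computed componentwise because `F` is right exact, kernels because `G` is left exact. Hence an
object with one vanishing component is simple iff its other component is, and exact functors
carry subquotients to subquotients.

Every `W` is an extension of `(W.left, 0)` by `(0, W.right)`: Jordan–Hölder filtrations of
`W.right` and `W.left`, placed in `W` as the subobjects `(0, Q)` and `(P, W.right)`, concatenate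
to one of `W`. Conversely the components of a filtration of `(X, 0)`, resp. `(0, Y)`, form a
filtration of `X`, resp. `Y`.
-/

open CategoryTheory CategoryTheory.Limits

section
variable {D : Type*} [Category D] [Abelian D]

/-- The quotient object `Q/P` associated to subobjects `P ≤ Q` of a fixed object. -/
noncomputable def subQuot {X : D} {P Q : Subobject X} (h : P ≤ Q) : D :=
  cokernel (Subobject.ofLE P Q h)

/-- `X` admits a Jordan–Hölder filtration: a finite chain
`⊥ = c 0 ≤ c 1 ≤ ⋯ ≤ c n = ⊤` of subobjects whose successive quotients are simple. -/
def HasJHFiltration (X : D) : Prop :=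
  ∃ (n : ℕ) (c : Fin (n + 1) → Subobject X) (hc : Monotone c),
    c 0 = ⊥ ∧ c (Fin.last n) = ⊤ ∧
    ∀ i : Fin n, Simple (subQuot (hc (Fin.castSucc_lt_succ : Fin.castSucc i < Fin.succ i).le))

end

open ZeroObject

section Abelian

variable {D : Type*} [Category* D] [Abelian D]

def simpleSubQuotRel (X : D) : SetRel (Subobject X) (Subobject X) :=
  {PQ | ∃ h : PQ.1 ≤ PQ.2, Simple (subQuot h)}

theorem hasJHFiltration_iff_exists_relSeries (X : D) :
    HasJHFiltration X ↔
      ∃ s : RelSeries (simpleSubQuotRel X), s.head = ⊥ ∧ s.last = ⊤ := by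
  constructor
  · rintro ⟨n, c, hc, hbot, htop, hsimple⟩
    exact ⟨⟨n, c, fun i => ⟨_, hsimple i⟩⟩, hbot, htop⟩
  · rintro ⟨s, hbot, htop⟩
    have hmono : Monotone s := Fin.monotone_iff_le_succ.2 fun i => (s.step i).1
    exact ⟨s.length, s, hmono, hbot, htop, fun i => (s.step i).2⟩

theorem isZero_subQuot_of_isZero {X : D} (hX : IsZero X) {P Q : Subobject X} (h : P ≤ Q) :
    IsZero (subQuot h) :=
  have hQ : IsZero (Q : D) := IsZero.of_mono_eq_zero Q.arrow (hX.eq_of_tgt _ _)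
  show IsZero (cokernel _) from IsZero.of_epi_eq_zero (cokernel.π _) (hQ.eq_of_src _ _)

noncomputable def subQuotMkIso {X P Q : D} (a : P ⟶ X) (b : Q ⟶ X) [Mono a] [Mono b]
    (u : P ⟶ Q) (w : u ≫ b = a) (h : Subobject.mk a ≤ Subobject.mk b) :
    subQuot h ≅ cokernel u :=
  cokernel.mapIso _ u (Subobject.underlyingIso a) (Subobject.underlyingIso b) <|
    (cancel_mono b).1 <| by simp [w]

end Abelian

namespace CategoryTheory.Functor

section

variable {D E : Type*} [Category* D] [Category* E] (Φ : D ⥤ E) [Φ.PreservesMonomorphisms]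

noncomputable def mapSubobject {X : D} (P : Subobject X) : Subobject (Φ.obj X) :=
  Subobject.mk (Φ.map P.arrow)

theorem mapSubobject_monotone (X : D) : Monotone (Φ.mapSubobject (X := X)) := fun P Q h =>
  Subobject.mk_le_mk_of_comm (Φ.map (Subobject.ofLE P Q h)) <| by
    rw [← Φ.map_comp, Subobject.ofLE_arrow]

theorem mapSubobject_top (X : D) : Φ.mapSubobject (⊤ : Subobject X) = ⊤ :=
  Subobject.mk_eq_top_of_isIso _

end

variable {D E : Type*} [Category* D] [Category* E] [Abelian D] [Abelian E]
  (Φ : D ⥤ E) [PreservesFiniteLimits Φ] [PreservesFiniteColimits Φ]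

theorem mapSubobject_bot (X : D) : Φ.mapSubobject (⊥ : Subobject X) = ⊥ :=
  Subobject.mk_eq_bot_iff_zero.2 <| by rw [Subobject.bot_arrow, Φ.map_zero]

noncomputable def subQuotMapSubobjectIso {X : D} {P Q : Subobject X} (h : P ≤ Q) :
    subQuot (Φ.mapSubobject_monotone X h) ≅ Φ.obj (subQuot h) :=
  subQuotMkIso _ _ (Φ.map (Subobject.ofLE P Q h))
    (by rw [← Φ.map_comp, Subobject.ofLE_arrow]) _ ≪≫ (PreservesCokernel.iso Φ _).symm

theorem hasJHFiltration_obj {X : D}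
    (hΦ : ∀ {P Q : Subobject X} (h : P ≤ Q),
      Simple (subQuot h) → Simple (Φ.obj (subQuot h)))
    (hX : HasJHFiltration X) : HasJHFiltration (Φ.obj X) := by
  obtain ⟨s, hbot, htop⟩ := (hasJHFiltration_iff_exists_relSeries X).1 hX
  let f : (simpleSubQuotRel X).Hom (simpleSubQuotRel (Φ.obj X)) :=
    ⟨Φ.mapSubobject, fun ⟨h, hs⟩ =>
      ⟨Φ.mapSubobject_monotone X h, (hΦ h hs).of_iso (Φ.subQuotMapSubobjectIso h)⟩⟩
  refine (hasJHFiltration_iff_exists_relSeries _).2 ⟨s.map f, ?_, ?_⟩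
  · simp [f, hbot, mapSubobject_bot]
  · simp [f, htop, mapSubobject_top]

end CategoryTheory.Functor

namespace CategoryTheory.Comma

section

variable {A B T : Type*} [Category* A] [Category* B] [Category* T] {L : A ⥤ T} {R : B ⥤ T}

instance preservesLimitsOfShape_fst {J : Type*} [Category* J] [HasLimitsOfShape J A]
    [HasLimitsOfShape J B] [PreservesLimitsOfShape J R] : PreservesLimitsOfShape J (fst L R) where
  preservesLimit := preservesLimit_of_preserves_limit_cone
    (coneOfPreservesIsLimit _ (limit.isLimit _) (limit.isLimit _)) (limit.isLimit _)

instance preservesLimitsOfShape_snd {J : Type*} [Category* J] [HasLimitsOfShape J A]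
    [HasLimitsOfShape J B] [PreservesLimitsOfShape J R] : PreservesLimitsOfShape J (snd L R) where
  preservesLimit := preservesLimit_of_preserves_limit_cone
    (coneOfPreservesIsLimit _ (limit.isLimit _) (limit.isLimit _)) (limit.isLimit _)

instance [HasFiniteLimits A] [HasFiniteLimits B] [PreservesFiniteLimits R] :
    PreservesFiniteLimits (fst L R) :=
  ⟨fun _ _ _ => inferInstance⟩

instance [HasFiniteLimits A] [HasFiniteLimits B] [PreservesFiniteLimits R] :
    PreservesFiniteLimits (snd L R) :=
  ⟨fun _ _ _ => inferInstance⟩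

instance [HasFiniteColimits A] [HasFiniteColimits B] [PreservesFiniteColimits L] :
    PreservesFiniteColimits (fst L R) :=
  ⟨fun _ _ _ => inferInstance⟩

instance [HasFiniteColimits A] [HasFiniteColimits B] [PreservesFiniteColimits L] :
    PreservesFiniteColimits (snd L R) :=
  ⟨fun _ _ _ => inferInstance⟩

theorem isIso_of_isIso_left_of_isIso_right {X Y : Comma L R} (f : X ⟶ Y) [IsIso f.left]
    [IsIso f.right] : IsIso f :=
  (isoMk (asIso f.left) (asIso f.right) f.w).isIso_hom

theorem mono_of_mono_left_of_mono_right {X Y : Comma L R} (f : X ⟶ Y) [Mono f.left]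
    [Mono f.right] : Mono f :=
  ⟨fun _ _ w => CommaMorphism.ext ((cancel_mono f.left).1 (congrArg CommaMorphism.left w))
    ((cancel_mono f.right).1 (congrArg CommaMorphism.right w))⟩

theorem isIso_iff_of_isZero_right {X Y : Comma L R} (f : X ⟶ Y) (hX : IsZero X.right)
    (hY : IsZero Y.right) : IsIso f ↔ IsIso f.left :=
  have := hX.isIso hY f.right
  ⟨fun _ => inferInstance, fun _ => isIso_of_isIso_left_of_isIso_right f⟩

theorem isIso_iff_of_isZero_left {X Y : Comma L R} (f : X ⟶ Y) (hX : IsZero X.left)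
    (hY : IsZero Y.left) : IsIso f ↔ IsIso f.right :=
  have := hX.isIso hY f.left
  ⟨fun _ => inferInstance, fun _ => isIso_of_isIso_left_of_isIso_right f⟩

section

variable (W : Comma L R)

abbrev restrictLeft {X : A} (f : X ⟶ W.left) : Comma L R where
  left := X
  right := W.right
  hom := L.map f ≫ W.hom

def restrictLeftHom {X : A} (f : X ⟶ W.left) : restrictLeft W f ⟶ W where
  left := f
  right := 𝟙 W.right
  w := by simp

instance {X : A} (f : X ⟶ W.left) [Mono f] : Mono (restrictLeftHom W f) :=
  have : Mono (restrictLeftHom W f).left := ‹Mono f›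
  have : Mono (restrictLeftHom W f).right := inferInstanceAs (Mono (𝟙 _))
  mono_of_mono_left_of_mono_right _

noncomputable def subobjectFullRight (P : Subobject W.left) : Subobject W :=
  Subobject.mk (restrictLeftHom W P.arrow)

theorem subobjectFullRight_top : subobjectFullRight W ⊤ = ⊤ :=
  have : IsIso (restrictLeftHom W (⊤ : Subobject W.left).arrow) :=
    have : IsIso (restrictLeftHom W (⊤ : Subobject W.left).arrow).left :=
      Subobject.isIso_top_arrow
    have : IsIso (restrictLeftHom W (⊤ : Subobject W.left).arrow).right :=
      inferInstanceAs (IsIso (𝟙 _))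
    isIso_of_isIso_left_of_isIso_right _
  Subobject.mk_eq_top_of_isIso _

end

end

section

variable {A B T : Type*} [Category* A] [Category* B] [Category* T] [HasZeroObject A]
  {L : A ⥤ T} [PreservesFiniteColimits L] {R : B ⥤ T}

variable (L R) in
noncomputable abbrev zeroLeft (Y : B) : Comma L R where
  left := 0
  right := Y
  hom := ((isZero_zero A).isInitial.isInitialObj L).to _

noncomputable def zeroLeftHom {W : Comma L R} {Y : B} (g : Y ⟶ W.right) :
    zeroLeft L R Y ⟶ W where
  left := (isZero_zero A).to_ _
  right := g
  w := ((isZero_zero A).isInitial.isInitialObj L).hom_ext _ _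

instance {W : Comma L R} {Y : B} (g : Y ⟶ W.right) [Mono g] : Mono (zeroLeftHom g) :=
  have : Mono (zeroLeftHom g).left := (isZero_zero A).mono _
  have : Mono (zeroLeftHom g).right := ‹Mono g›
  mono_of_mono_left_of_mono_right _

theorem zeroLeftHom_comp {W : Comma L R} {Y Y' : B} (g : Y ⟶ Y') (g' : Y' ⟶ W.right) :
    zeroLeftHom (W := zeroLeft L R Y') g ≫ zeroLeftHom g' = zeroLeftHom (g ≫ g') :=
  CommaMorphism.ext ((isZero_zero A).eq_of_src _ _) rfl

variable (W : Comma L R)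

noncomputable def subobjectZeroLeft (P : Subobject W.right) : Subobject W :=
  Subobject.mk (zeroLeftHom P.arrow)

theorem subobjectZeroLeft_top : subobjectZeroLeft W ⊤ = subobjectFullRight W ⊥ :=
  Subobject.mk_eq_mk_of_comm _ _
    (isoMk Subobject.botCoeIsoZero.symm (asIso (⊤ : Subobject W.right).arrow)
      (((isZero_zero A).isInitial.isInitialObj L).hom_ext _ _))
    (CommaMorphism.ext ((isZero_zero A).eq_of_src _ _) (Category.comp_id _))

end

section

variable {A B T : Type*} [Category* A] [Category* B] [Category* T] [HasZeroObject B]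
  (L : A ⥤ T) (R : B ⥤ T) [PreservesFiniteLimits R]

noncomputable abbrev zeroRight (X : A) : Comma L R where
  left := X
  right := 0
  hom := ((isZero_zero B).isTerminal.isTerminalObj R).from _

end

variable {A B T : Type*} [Category* A] [Category* B] [Category* T] [Abelian A] [Abelian B]
  {L : A ⥤ T} {R : B ⥤ T} [PreservesFiniteLimits R] [Abelian (Comma L R)]

-- The zero morphisms are those of the given abelian structure; `fst` and `snd` preserve them
-- because they preserve the zero object.
theorem hom_eq_zero_iff {X Y : Comma L R} (f : X ⟶ Y) : f = 0 ↔ f.left = 0 ∧ f.right = 0 :=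
  ⟨fun h => h ▸ ⟨(fst L R).map_zero X Y, (snd L R).map_zero X Y⟩, fun ⟨hl, hr⟩ =>
    CommaMorphism.ext (hl.trans ((fst L R).map_zero X Y).symm)
      (hr.trans ((snd L R).map_zero X Y).symm)⟩

theorem hom_eq_zero_iff_of_isZero_right {X Y : Comma L R} (hY : IsZero Y.right) (f : X ⟶ Y) :
    f = 0 ↔ f.left = 0 := by
  rw [hom_eq_zero_iff, and_iff_left (hY.eq_of_tgt _ _)]

theorem hom_eq_zero_iff_of_isZero_left {X Y : Comma L R} (hY : IsZero Y.left) (f : X ⟶ Y) :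
    f = 0 ↔ f.right = 0 := by
  rw [hom_eq_zero_iff, and_iff_right (hY.eq_of_tgt _ _)]

variable [PreservesFiniteColimits L]

theorem simple_iff_simple_left {S : Comma L R} (hS : IsZero S.right) :
    Simple S ↔ Simple S.left := by
  constructor
  · refine fun _ => ⟨fun {P} p _ => ?_⟩
    let q : ({ left := P, right := S.right, hom := L.map p ≫ S.hom } : Comma L R) ⟶ S :=
      { left := p, right := 𝟙 S.right }
    have := mono_of_mono_left_of_mono_right q
    exact (isIso_iff_of_isZero_right q hS hS).symm.trans <|
      (Simple.mono_isIso_iff_nonzero q).trans (not_congr (hom_eq_zero_iff_of_isZero_right hS q))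
  · refine fun _ => ⟨fun {Y} q _ => ?_⟩
    have : Mono q.left := (fst L R).map_mono q
    have : Mono q.right := (snd L R).map_mono q
    have hY : IsZero Y.right := IsZero.of_mono_eq_zero q.right (hS.eq_of_tgt _ _)
    exact (isIso_iff_of_isZero_right q hY hS).trans <|
      (Simple.mono_isIso_iff_nonzero q.left).trans
        (not_congr (hom_eq_zero_iff_of_isZero_right hS q)).symm

theorem simple_iff_simple_right {S : Comma L R} (hS : IsZero S.left) :
    Simple S ↔ Simple S.right := by
  have hL : IsInitial (L.obj S.left) := hS.isInitial.isInitialObj L _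
  constructor
  · refine fun _ => ⟨fun {P} p _ => ?_⟩
    let q : ({ left := S.left, right := P, hom := hL.to _ } : Comma L R) ⟶ S :=
      { left := 𝟙 S.left, right := p, w := hL.hom_ext _ _ }
    have := mono_of_mono_left_of_mono_right q
    exact (isIso_iff_of_isZero_left q hS hS).symm.trans <|
      (Simple.mono_isIso_iff_nonzero q).trans (not_congr (hom_eq_zero_iff_of_isZero_left hS q))
  · refine fun _ => ⟨fun {Y} q _ => ?_⟩
    have : Mono q.left := (fst L R).map_mono q
    have : Mono q.right := (snd L R).map_mono q
    have hY : IsZero Y.left := IsZero.of_mono_eq_zero q.left (hS.eq_of_tgt _ _)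
    exact (isIso_iff_of_isZero_left q hY hS).trans <|
      (Simple.mono_isIso_iff_nonzero q.right).trans
        (not_congr (hom_eq_zero_iff_of_isZero_left hS q)).symm

theorem simple_cokernel_iff_of_epi_left {X Y : Comma L R} (u : X ⟶ Y) [Epi u.left] :
    Simple (cokernel u) ↔ Simple (cokernel u.right) :=
  (simple_iff_simple_right ((isZero_cokernel_of_epi u.left).of_iso
    (PreservesCokernel.iso (fst L R) u))).trans
    (Simple.iff_of_iso (PreservesCokernel.iso (snd L R) u))

theorem simple_cokernel_iff_of_epi_right {X Y : Comma L R} (u : X ⟶ Y) [Epi u.right] :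
    Simple (cokernel u) ↔ Simple (cokernel u.left) :=
  (simple_iff_simple_left ((isZero_cokernel_of_epi u.right).of_iso
    (PreservesCokernel.iso (snd L R) u))).trans
    (Simple.iff_of_iso (PreservesCokernel.iso (fst L R) u))

variable (W : Comma L R)

theorem subobjectZeroLeft_bot : subobjectZeroLeft W ⊥ = ⊥ :=
  Subobject.mk_eq_bot_iff_zero.2 <|
    (hom_eq_zero_iff _).2 ⟨(isZero_zero A).eq_of_src _ _, Subobject.bot_arrow⟩

theorem subobjectZeroLeft_mem_simpleSubQuotRel {P Q : Subobject W.right}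
    (hPQ : (P, Q) ∈ simpleSubQuotRel W.right) :
    (subobjectZeroLeft W P, subobjectZeroLeft W Q) ∈ simpleSubQuotRel W := by
  obtain ⟨h, hs⟩ := hPQ
  let u := zeroLeftHom (W := zeroLeft L R Q) (Subobject.ofLE P Q h)
  have w : u ≫ zeroLeftHom Q.arrow = zeroLeftHom P.arrow := by
    rw [zeroLeftHom_comp, Subobject.ofLE_arrow]
  have : Epi u.left := (isZero_zero A).epi _
  have hle := Subobject.mk_le_mk_of_comm u w
  exact ⟨hle, (Simple.iff_of_iso (subQuotMkIso _ _ u w hle)).2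
    ((simple_cokernel_iff_of_epi_left u).2 hs)⟩

theorem subobjectFullRight_mem_simpleSubQuotRel {P Q : Subobject W.left}
    (hPQ : (P, Q) ∈ simpleSubQuotRel W.left) :
    (subobjectFullRight W P, subobjectFullRight W Q) ∈ simpleSubQuotRel W := by
  obtain ⟨h, hs⟩ := hPQ
  let u : restrictLeft W P.arrow ⟶ restrictLeft W Q.arrow :=
    { left := Subobject.ofLE P Q h
      right := 𝟙 W.right
      w := by simp [← L.map_comp_assoc] }
  have w : u ≫ restrictLeftHom W Q.arrow = restrictLeftHom W P.arrow :=
    CommaMorphism.ext (Subobject.ofLE_arrow h) (Category.comp_id _)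
  have : Epi u.right := inferInstanceAs (Epi (𝟙 _))
  have hle := Subobject.mk_le_mk_of_comm u w
  exact ⟨hle, (Simple.iff_of_iso (subQuotMkIso _ _ u w hle)).2
    ((simple_cokernel_iff_of_epi_right u).2 hs)⟩

theorem hasJHFiltration_of_left_of_right (hl : HasJHFiltration W.left)
    (hr : HasJHFiltration W.right) : HasJHFiltration W := by
  obtain ⟨sl, hl₀, hl₁⟩ := (hasJHFiltration_iff_exists_relSeries _).1 hl
  obtain ⟨sr, hr₀, hr₁⟩ := (hasJHFiltration_iff_exists_relSeries _).1 hr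
  let sr' := sr.map ⟨subobjectZeroLeft W, subobjectZeroLeft_mem_simpleSubQuotRel W⟩
  let sl' := sl.map ⟨subobjectFullRight W, subobjectFullRight_mem_simpleSubQuotRel W⟩
  have hjoin : sr'.last = sl'.head := by
    simp [sr', sl', hr₁, hl₀, subobjectZeroLeft_top]
  refine (hasJHFiltration_iff_exists_relSeries W).2 ⟨sr'.smash sl' hjoin, ?_, ?_⟩
  · simp [sr', hr₀, subobjectZeroLeft_bot]
  · simp [sl', hl₁, subobjectFullRight_top]

variable {W}

theorem hasJHFiltration_left_of_isZero_right (hW : IsZero W.right) (h : HasJHFiltration W) :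
    HasJHFiltration W.left :=
  (fst L R).hasJHFiltration_obj (fun hPQ hs =>
    (simple_iff_simple_left ((isZero_subQuot_of_isZero hW _).of_iso
      ((snd L R).subQuotMapSubobjectIso hPQ).symm)).1 hs) h

theorem hasJHFiltration_right_of_isZero_left (hW : IsZero W.left) (h : HasJHFiltration W) :
    HasJHFiltration W.right :=
  (snd L R).hasJHFiltration_obj (fun hPQ hs =>
    (simple_iff_simple_right ((isZero_subQuot_of_isZero hW _).of_iso
      ((fst L R).subQuotMapSubobjectIso hPQ).symm)).1 hs) h

end CategoryTheory.Comma

theorem comma_jordanHolder_iff_general {A B C : Type*} [Category A] [Category B] [Category C]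
    [Abelian A] [Abelian B]
    (F : A ⥤ C) [PreservesFiniteColimits F] (G : B ⥤ C) [PreservesFiniteLimits G]
    [Abelian (Comma F G)] :
    ((∀ X : A, HasJHFiltration X) ∧ (∀ Y : B, HasJHFiltration Y)) ↔
      (∀ W : Comma F G, HasJHFiltration W) := by
  constructor
  · rintro ⟨hA, hB⟩ W
    exact Comma.hasJHFiltration_of_left_of_right W (hA _) (hB _)
  · intro h
    exact ⟨fun X => Comma.hasJHFiltration_left_of_isZero_right
        (W := Comma.zeroRight F G X) (isZero_zero B) (h _),
      fun Y => Comma.hasJHFiltration_right_of_isZero_left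
        (W := Comma.zeroLeft F G Y) (isZero_zero A) (h _)⟩

/-- Let `A`, `B`, `C` be abelian categories, `F : A ⥤ C` right exact, `G : B ⥤ C`
left exact (so `Comma F G` is abelian). Every object of `A` and every object of `B`
admits a Jordan–Hölder filtration if and only if every object of the comma category
`Comma F G` admits a Jordan–Hölder filtration. -/
theorem comma_jordanHolder_iff {A B C : Type*} [Category A] [Category B] [Category C]
    [Abelian A] [Abelian B] [Abelian C]
    (F : A ⥤ C) [PreservesFiniteColimits F] (G : B ⥤ C) [PreservesFiniteLimits G]
    [Abelian (Comma F G)] :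
    ((∀ X : A, HasJHFiltration X) ∧ (∀ Y : B, HasJHFiltration Y)) ↔
      (∀ W : Comma F G, HasJHFiltration W) :=
  comma_jordanHolder_iff_general F G
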